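/- arXiv:math/0612097 — 5 statements merged into one kernel-verified Lean document; each statement's English description precedes it below -/
import Mathlib

section
/- Let x(s) = c₁q^s + c₂q^{-s} + c₃ be a q-quadratic lattice and x_k(s) = x(s+k/2). Then there exist constants A, B, C ∈ ℂ (depending on q, c₁, c₂, c₃ but not on s) such that for all integers s and all integers k, x_k(s)·x_k(s-1) = A·x_{k-1}(s)² + B·x_{k-1}(s) + C. In particular x_k(s)x_k(s-1) is a polynomial of degree at most 2 in x_{k-1}(s). -/
/-!
With `a = c₁ rⁿ` and `b = c₂ r⁻ⁿ` we have `x(n) = a + b + c₃` and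
`x(n + 1) x(n - 1) = (a r + b r⁻¹ + c₃)(a r⁻¹ + b r + c₃)`, which depends on `n` only through
`a + b` and `a b = c₁ c₂`. Hence it is a quadratic polynomial in `x(n)` whose coefficients do not
depend on `n`. Since `x_k(s) = x(2s + k)`, the values `x_k(s)` and `x_k(s - 1)` are the two
neighbours of `x_{k-1}(s)` on the integer lattice.
-/

variable {K : Type*} [Field K]

/-- The lattice `x(m) = c₁ rᵐ + c₂ r⁻ᵐ + c₃`; with `r = q^{1/2}` this is `x(m/2)` in the paper. -/
def qQuadraticLattice (r c₁ c₂ c₃ : K) (m : ℤ) : K :=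
  c₁ * r ^ m + c₂ * r ^ (-m) + c₃

theorem qQuadraticLattice_succ_mul_pred (r c₁ c₂ c₃ : K) (hr : r ≠ 0) (n : ℤ) :
    qQuadraticLattice r c₁ c₂ c₃ (n + 1) * qQuadraticLattice r c₁ c₂ c₃ (n - 1) =
      qQuadraticLattice r c₁ c₂ c₃ n ^ 2 +
        c₃ * (r + r⁻¹ - 2) * qQuadraticLattice r c₁ c₂ c₃ n +
        (c₁ * c₂ * (r ^ 2 + (r ^ 2)⁻¹ - 2) - c₃ ^ 2 * (r + r⁻¹ - 2)) := by
  have hu : r ^ n ≠ 0 := zpow_ne_zero n hr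
  simp only [qQuadraticLattice, zpow_neg, zpow_add₀ hr, zpow_sub₀ hr, zpow_one]
  field_simp
  ring

/-- For the q-quadratic lattice `x_k(s) = c₁ r^{2s+k} + c₂ r^{-(2s+k)} + c₃`
(with `r = q^{1/2}`), there exist constants `A, B, C` depending only on
`r, c₁, c₂, c₃` such that for all integers `s` and `k`,
`x_k(s) · x_k(s-1) = A · x_{k-1}(s)² + B · x_{k-1}(s) + C`. -/
theorem lattice_product_quadratic (r c₁ c₂ c₃ : ℂ) (hr : r ≠ 0) :
    ∃ A B C : ℂ, ∀ s k : ℤ,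
      ((fun m : ℤ => c₁ * r ^ m + c₂ * r ^ (-m) + c₃) (2 * s + k)) *
        ((fun m : ℤ => c₁ * r ^ m + c₂ * r ^ (-m) + c₃) (2 * (s - 1) + k)) =
      A * ((fun m : ℤ => c₁ * r ^ m + c₂ * r ^ (-m) + c₃) (2 * s + (k - 1))) ^ 2 +
        B * ((fun m : ℤ => c₁ * r ^ m + c₂ * r ^ (-m) + c₃) (2 * s + (k - 1))) + C := by
  refine ⟨1, c₃ * (r + r⁻¹ - 2),
    c₁ * c₂ * (r ^ 2 + (r ^ 2)⁻¹ - 2) - c₃ ^ 2 * (r + r⁻¹ - 2), fun s k => ?_⟩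
  have h := qQuadraticLattice_succ_mul_pred r c₁ c₂ c₃ hr (2 * s + (k - 1))
  rw [show 2 * s + (k - 1) + 1 = 2 * s + k by ring,
    show 2 * s + (k - 1) - 1 = 2 * (s - 1) + k by ring, ← one_mul (_ ^ 2)] at h
  exact h
end

section
/- Let x(s) = c₁q^s + c₂q^{-s} + c₃ be a q-quadratic lattice with x(s+1) ≠ x(s) for all s, x₁(s) = x(s+1/2), Δ^{(1)}f(s) = (f(s+1)−f(s))/(x(s+1)−x(s)), and Mf(s) = (f(s+1)+f(s))/2. Then for any function p : ℤ → ℂ and every integer s, Δ^{(1)}(x·p)(s) = M p(s) + α_q(1)·x₁(s)·Δ^{(1)}p(s) + c₃·(1 − α_q(1))·Δ^{(1)}p(s), where α_q(1) = (q^{1/2}+q^{-1/2})/2. -/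
/-! On the lattice `X m = c₁ rᵐ + c₂ r⁻ᵐ + c₃` the two neighbours of a point average to
`α X m + c₃ (1 - α)` with `α = (r + r⁻¹)/2`, because `r^(m+1) + r^(m-1) = (r + r⁻¹) rᵐ`.
The claim is then the discrete product rule `Δ(x p) = M p + (M x) Δ p`, where
`M x(s) = (x(s) + x(s+1))/2` is such an average with `X (2s+1)` in the middle. -/

theorem zpow_add_one_add_zpow_sub_one {K : Type*} [Field K] {r : K} (hr : r ≠ 0) (m : ℤ) :
    r ^ (m + 1) + r ^ (m - 1) = (r + r⁻¹) * r ^ m := by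
  rw [zpow_add_one₀ hr, zpow_sub_one₀ hr]
  ring

theorem qQuadraticLattice_add_one_add_sub_one {K : Type*} [Field K] {r : K} (hr : r ≠ 0)
    (c₁ c₂ c₃ : K) {X : ℤ → K} (hX : ∀ m : ℤ, X m = c₁ * r ^ m + c₂ * r ^ (-m) + c₃) (m : ℤ) :
    X (m + 1) + X (m - 1) = (r + r⁻¹) * X m + c₃ * (2 - (r + r⁻¹)) := by
  have hpos := zpow_add_one_add_zpow_sub_one hr m
  have hneg := zpow_add_one_add_zpow_sub_one hr (-m)
  rw [hX, hX, hX, show -(m + 1) = -m - 1 by ring, show -(m - 1) = -m + 1 by ring]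
  linear_combination c₁ * hpos + c₂ * hneg

theorem mul_sub_mul_div_sub_eq_mean_add {K : Type*} [Field K] [NeZero (2 : K)] {a b : K} (hab : a ≠ b)
    (u v : K) :
    (a * u - b * v) / (a - b) = (u + v) / 2 + (a + b) / 2 * ((u - v) / (a - b)) := by
  have hab' : a - b ≠ 0 := sub_ne_zero.mpr hab
  field_simp
  ring

/-- For the q-quadratic lattice `x(s) = c₁ q^s + c₂ q^{-s} + c₃` (encoded via
`X m := c₁ r^m + c₂ r^{-m} + c₃` with `r = q^{1/2}`, so `x(s) = X (2s)` and
`x₁(s) = X (2s+1)`), with `Δ^{(1)}f(s) = (f(s+1)−f(s))/(x(s+1)−x(s))` and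
`Mf(s) = (f(s+1)+f(s))/2`, one has for every `p : ℤ → ℂ` and integer `s`:
`Δ^{(1)}(x·p)(s) = Mp(s) + α_q(1) x₁(s) Δ^{(1)}p(s) + c₃(1−α_q(1)) Δ^{(1)}p(s)`,
where `α_q(1) = (r + r⁻¹)/2`. -/
theorem mean_process_xp (r c₁ c₂ c₃ : ℂ) (hr : r ≠ 0)
    (X : ℤ → ℂ) (hX : ∀ m : ℤ, X m = c₁ * r ^ m + c₂ * r ^ (-m) + c₃)
    (hx : ∀ s : ℤ, X (2 * (s + 1)) ≠ X (2 * s))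
    (p : ℤ → ℂ) (s : ℤ) :
    (X (2 * (s + 1)) * p (s + 1) - X (2 * s) * p s) / (X (2 * (s + 1)) - X (2 * s)) =
      (p (s + 1) + p s) / 2 +
        ((r + r⁻¹) / 2) * X (2 * s + 1) *
          ((p (s + 1) - p s) / (X (2 * (s + 1)) - X (2 * s))) +
        c₃ * (1 - (r + r⁻¹) / 2) *
          ((p (s + 1) - p s) / (X (2 * (s + 1)) - X (2 * s))) := by
  have hmean : X (2 * (s + 1)) + X (2 * s) =
      (r + r⁻¹) * X (2 * s + 1) + c₃ * (2 - (r + r⁻¹)) := by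
    rw [show 2 * (s + 1) = 2 * s + 1 + 1 by ring]
    simpa using qQuadraticLattice_add_one_add_sub_one hr c₁ c₂ c₃ hX (2 * s + 1)
  rw [mul_sub_mul_div_sub_eq_mean_add (hx s), hmean]
  ring
end

section
/- Divided difference of powers: Let x(s) = c₁q^s + c₂q^{-s} + c₃ with c₁c₂ ≠ 0, q not a root of unity and q ≠ 0, and assume x(s+1) ≠ x(s) for all s. Then for every n ≥ 1 there exists a polynomial r of degree n−1 with leading coefficient [n]_q such that for all integers s, (x(s+1)^n − x(s)^n)/(x(s+1) − x(s)) = r(x₁(s)), where x₁(s) = x(s+1/2) and [n]_q = (q^{n/2}−q^{-n/2})/(q^{1/2}−q^{-1/2}). -/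
/-!
For `a = x(s+1)` and `b = x(s)`, the divided difference `(aⁿ - bⁿ)/(a - b)` is the Lucas
sequence `Uₙ(a + b, ab)`, defined by `U₀ = 0`, `U₁ = 1`, `Uₙ₊₂ = (a + b) Uₙ₊₁ - ab Uₙ`.
On the lattice, `a + b` and `ab` are polynomials in `x₁(s)` of degrees 1 and 2 with leading
coefficients `q^{1/2} + q^{-1/2}` and `1`. Hence `Uₙ(a + b, ab)` is a polynomial in `x₁(s)` of
degree at most `n - 1`, and its coefficient of degree `n - 1` is `Uₙ(q^{1/2} + q^{-1/2}, 1) = [n]_q`,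
which is nonzero because `q` is not a root of unity.
-/

open Polynomial

section Lucas

variable {R : Type*} [CommRing R]

def lucasU (s p : R) : ℕ → R
  | 0 => 0
  | 1 => 1
  | n + 2 => s * lucasU s p (n + 1) - p * lucasU s p n

theorem map_lucasU {R' : Type*} [CommRing R'] (f : R →+* R') (s p : R) (n : ℕ) :
    f (lucasU s p n) = lucasU (f s) (f p) n := by
  induction n using Nat.twoStepInduction with
  | zero => simp [lucasU]
  | one => simp [lucasU]
  | more n ih₀ ih₁ => simp [lucasU, ih₀, ih₁]

theorem sub_mul_lucasU (a b : R) (n : ℕ) :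
    (a - b) * lucasU (a + b) (a * b) n = a ^ n - b ^ n := by
  induction n using Nat.twoStepInduction with
  | zero => simp [lucasU]
  | one => simp [lucasU]
  | more n ih₀ ih₁ =>
    rw [lucasU]
    linear_combination (a + b) * ih₁ - a * b * ih₀

variable {S P : R[X]}

theorem natDegree_lucasU_le (hS : S.natDegree ≤ 1) (hP : P.natDegree ≤ 2) (n : ℕ) :
    (lucasU S P n).natDegree ≤ n - 1 := by
  induction n using Nat.twoStepInduction with
  | zero => simp [lucasU]
  | one => simp [lucasU]
  | more n ih₀ ih₁ =>
    rw [lucasU]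
    refine (natDegree_sub_le _ _).trans (max_le ?_ ?_)
    · exact (natDegree_mul_le_of_le hS ih₁).trans (by omega)
    · rcases n with _ | n
      · simp [lucasU]
      · exact (natDegree_mul_le_of_le hP ih₀).trans (by omega)

theorem coeff_lucasU (hS : S.natDegree ≤ 1) (hP : P.natDegree ≤ 2) (n : ℕ) :
    (lucasU S P n).coeff (n - 1) = lucasU (S.coeff 1) (P.coeff 2) n := by
  induction n using Nat.twoStepInduction with
  | zero => simp [lucasU]
  | one => simp [lucasU]
  | more n ih₀ ih₁ =>
    have hdeg (m : ℕ) : (lucasU S P (m + 1)).natDegree ≤ m := natDegree_lucasU_le hS hP (m + 1)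
    rw [Nat.add_sub_cancel] at ih₁
    rw [lucasU, coeff_sub, show n + 2 - 1 = 1 + n by omega,
      coeff_mul_add_eq_of_natDegree_le hS (hdeg n), ih₁]
    congr 1
    rcases n with _ | n
    · simp [lucasU]
    · rw [← ih₀, show 1 + (n + 1) = 2 + n by omega]
      exact coeff_mul_add_eq_of_natDegree_le hP (hdeg n)

theorem natDegree_lucasU (hS : S.natDegree ≤ 1) (hP : P.natDegree ≤ 2) {n : ℕ}
    (hn : n ≠ 0 → lucasU (S.coeff 1) (P.coeff 2) n ≠ 0) :
    (lucasU S P n).natDegree = n - 1 := by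
  refine (natDegree_lucasU_le hS hP n).antisymm ?_
  rcases n with _ | n
  · exact Nat.zero_le _
  · exact le_natDegree_of_ne_zero (by rw [coeff_lucasU hS hP]; exact hn n.succ_ne_zero)

theorem leadingCoeff_lucasU (hS : S.natDegree ≤ 1) (hP : P.natDegree ≤ 2) {n : ℕ}
    (hn : (lucasU S P n).natDegree = n - 1) :
    (lucasU S P n).leadingCoeff = lucasU (S.coeff 1) (P.coeff 2) n := by
  rw [leadingCoeff, hn, coeff_lucasU hS hP]

end Lucas

section QNumber

variable {K : Type*} [Field K] {r : K}

theorem lucasU_add_inv (hr : r ≠ 0) (hr2 : r ^ 2 ≠ 1) (n : ℕ) :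
    lucasU (r + r⁻¹) 1 n = (r ^ (n : ℤ) - r ^ (-(n : ℤ))) / (r - r⁻¹) := by
  have hsub : r - r⁻¹ ≠ 0 := by
    contrapose! hr2
    rw [sq]
    nth_rw 2 [sub_eq_zero.mp hr2]
    exact mul_inv_cancel₀ hr
  rw [eq_div_iff hsub, mul_comm, ← mul_inv_cancel₀ hr, sub_mul_lucasU, zpow_neg, zpow_natCast,
    inv_pow]

theorem lucasU_add_inv_ne_zero (hr : r ≠ 0) {n : ℕ} (hn : (r ^ 2) ^ n ≠ 1) :
    lucasU (r + r⁻¹) 1 n ≠ 0 := by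
  intro h
  have := sub_mul_lucasU r r⁻¹ n
  rw [mul_inv_cancel₀ hr, h, mul_zero, eq_comm, sub_eq_zero] at this
  apply hn
  calc (r ^ 2) ^ n = r ^ n * r ^ n := by ring
    _ = r ^ n * r⁻¹ ^ n := congrArg (r ^ n * ·) this
    _ = 1 := by rw [← mul_pow, mul_inv_cancel₀ hr, one_pow]

end QNumber

section QLattice

variable {K : Type*} [Field K] {r : K}

/-- With `r = q^{1/2}`, the paper's `x(s)` is `qLattice r c₁ c₂ c₃ (2 * s)` and
`x₁(s) = x(s + 1/2)` is `qLattice r c₁ c₂ c₃ (2 * s + 1)`. -/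
def qLattice (r c₁ c₂ c₃ : K) (t : ℤ) : K := c₁ * r ^ t + c₂ * r ^ (-t) + c₃

/- With `u = x - c₃` one has `u(t+2) + u(t) = (r + r⁻¹) u(t+1)` and
`u(t+2) u(t) = u(t+1)² + c₁ c₂ (r - r⁻¹)²`; the next two polynomials re-expand this in `x`. -/
noncomputable def qLatticeSumPoly (r c₃ : K) : K[X] :=
  C (r + r⁻¹) * X + C ((2 - (r + r⁻¹)) * c₃)

noncomputable def qLatticeProdPoly (r c₁ c₂ c₃ : K) : K[X] :=
  X ^ 2 + C ((r + r⁻¹ - 2) * c₃) * X + C ((2 - (r + r⁻¹)) * c₃ ^ 2 + c₁ * c₂ * (r - r⁻¹) ^ 2)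

theorem natDegree_qLatticeSumPoly_le (r c₃ : K) : (qLatticeSumPoly r c₃).natDegree ≤ 1 := by
  unfold qLatticeSumPoly; compute_degree

theorem natDegree_qLatticeProdPoly_le (r c₁ c₂ c₃ : K) :
    (qLatticeProdPoly r c₁ c₂ c₃).natDegree ≤ 2 := by
  unfold qLatticeProdPoly; compute_degree

theorem coeff_qLatticeSumPoly_one (r c₃ : K) : (qLatticeSumPoly r c₃).coeff 1 = r + r⁻¹ := by
  simp [qLatticeSumPoly]

theorem coeff_qLatticeProdPoly_two (r c₁ c₂ c₃ : K) :
    (qLatticeProdPoly r c₁ c₂ c₃).coeff 2 = 1 := by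
  rw [qLatticeProdPoly, coeff_add, coeff_add, coeff_C_mul_X, coeff_X_pow, coeff_C]
  simp

variable (c₁ c₂ c₃ : K)

theorem eval_qLatticeSumPoly (hr : r ≠ 0) (t : ℤ) :
    (qLatticeSumPoly r c₃).eval (qLattice r c₁ c₂ c₃ (t + 1)) =
      qLattice r c₁ c₂ c₃ (t + 2) + qLattice r c₁ c₂ c₃ t := by
  simp only [qLatticeSumPoly, qLattice, eval_add, eval_mul, eval_C, eval_X, zpow_neg,
    zpow_add₀ hr, zpow_one, zpow_two]
  field_simp
  ring

theorem eval_qLatticeProdPoly (hr : r ≠ 0) (t : ℤ) :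
    (qLatticeProdPoly r c₁ c₂ c₃).eval (qLattice r c₁ c₂ c₃ (t + 1)) =
      qLattice r c₁ c₂ c₃ (t + 2) * qLattice r c₁ c₂ c₃ t := by
  simp only [qLatticeProdPoly, qLattice, eval_add, eval_mul, eval_pow, eval_C, eval_X, zpow_neg,
    zpow_add₀ hr, zpow_one, zpow_two]
  field_simp
  ring

theorem qLattice_pow_sub_pow (hr : r ≠ 0) (t : ℤ) (n : ℕ) :
    qLattice r c₁ c₂ c₃ (t + 2) ^ n - qLattice r c₁ c₂ c₃ t ^ n =
      (qLattice r c₁ c₂ c₃ (t + 2) - qLattice r c₁ c₂ c₃ t) *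
        (lucasU (qLatticeSumPoly r c₃) (qLatticeProdPoly r c₁ c₂ c₃) n).eval
          (qLattice r c₁ c₂ c₃ (t + 1)) := by
  rw [← coe_evalRingHom, map_lucasU, coe_evalRingHom, eval_qLatticeSumPoly _ _ _ hr,
    eval_qLatticeProdPoly _ _ _ hr, sub_mul_lucasU]

end QLattice

theorem divided_difference_of_powers_general (r c₁ c₂ c₃ : ℂ) (hr : r ≠ 0)
    (hroot : ∀ m : ℕ, 1 ≤ m → (r ^ 2) ^ m ≠ 1)
    (hx : ∀ s : ℤ, c₁ * r ^ (2 * (s + 1)) + c₂ * r ^ (-(2 * (s + 1))) + c₃ ≠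
      c₁ * r ^ (2 * s) + c₂ * r ^ (-(2 * s)) + c₃)
    (n : ℕ) :
    ∃ p : Polynomial ℂ, p.natDegree = n - 1 ∧
      p.leadingCoeff = (r ^ (n : ℤ) - r ^ (-(n : ℤ))) / (r - r⁻¹) ∧
      ∀ s : ℤ,
        ((c₁ * r ^ (2 * (s + 1)) + c₂ * r ^ (-(2 * (s + 1))) + c₃) ^ n -
            (c₁ * r ^ (2 * s) + c₂ * r ^ (-(2 * s)) + c₃) ^ n) /
          ((c₁ * r ^ (2 * (s + 1)) + c₂ * r ^ (-(2 * (s + 1))) + c₃) -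
            (c₁ * r ^ (2 * s) + c₂ * r ^ (-(2 * s)) + c₃)) =
        p.eval (c₁ * r ^ (2 * s + 1) + c₂ * r ^ (-(2 * s + 1)) + c₃) := by
  have hS := natDegree_qLatticeSumPoly_le r c₃
  have hP := natDegree_qLatticeProdPoly_le r c₁ c₂ c₃
  have hdeg : (lucasU (qLatticeSumPoly r c₃) (qLatticeProdPoly r c₁ c₂ c₃) n).natDegree = n - 1 :=
    natDegree_lucasU hS hP fun hn => by
      rw [coeff_qLatticeSumPoly_one, coeff_qLatticeProdPoly_two]
      exact lucasU_add_inv_ne_zero hr (hroot n (Nat.one_le_iff_ne_zero.mpr hn))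
  refine ⟨_, hdeg, ?_, fun s => ?_⟩
  · rw [leadingCoeff_lucasU hS hP hdeg, coeff_qLatticeSumPoly_one, coeff_qLatticeProdPoly_two,
      lucasU_add_inv hr (by simpa using hroot 1 le_rfl)]
  · have h := qLattice_pow_sub_pow c₁ c₂ c₃ hr (2 * s) n
    rw [show 2 * s + 2 = 2 * (s + 1) by ring] at h
    rw [div_eq_iff (sub_ne_zero.mpr (hx s))]
    exact h.trans (mul_comm _ _)

/-- Divided difference of powers on a q-quadratic lattice: for `q = r²` not zero
and not a root of unity, `c₁c₂ ≠ 0`, and `x(s) = c₁ r^{2s} + c₂ r^{-2s} + c₃` with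
`x(s+1) ≠ x(s)`, for every `n ≥ 1` there is a polynomial of degree `n−1` with
leading coefficient `[n]_q = (r^n − r^{-n})/(r − r⁻¹)` such that
`(x(s+1)^n − x(s)^n)/(x(s+1) − x(s)) = r(x₁(s))` for all integers `s`, where
`x₁(s) = c₁ r^{2s+1} + c₂ r^{-(2s+1)} + c₃`. -/
theorem divided_difference_of_powers (r c₁ c₂ c₃ : ℂ) (hr : r ≠ 0)
    (hroot : ∀ m : ℕ, 1 ≤ m → (r ^ 2) ^ m ≠ 1) (hc : c₁ * c₂ ≠ 0)
    (hx : ∀ s : ℤ, c₁ * r ^ (2 * (s + 1)) + c₂ * r ^ (-(2 * (s + 1))) + c₃ ≠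
      c₁ * r ^ (2 * s) + c₂ * r ^ (-(2 * s)) + c₃)
    (n : ℕ) (hn : 1 ≤ n) :
    ∃ p : Polynomial ℂ, p.natDegree = n - 1 ∧
      p.leadingCoeff = (r ^ (n : ℤ) - r ^ (-(n : ℤ))) / (r - r⁻¹) ∧
      ∀ s : ℤ,
        ((c₁ * r ^ (2 * (s + 1)) + c₂ * r ^ (-(2 * (s + 1))) + c₃) ^ n -
            (c₁ * r ^ (2 * s) + c₂ * r ^ (-(2 * s)) + c₃) ^ n) /
          ((c₁ * r ^ (2 * (s + 1)) + c₂ * r ^ (-(2 * (s + 1))) + c₃) -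
            (c₁ * r ^ (2 * s) + c₂ * r ^ (-(2 * s)) + c₃)) =
        p.eval (c₁ * r ^ (2 * s + 1) + c₂ * r ^ (-(2 * s + 1)) + c₃) :=
  divided_difference_of_powers_general r c₁ c₂ c₃ hr hroot hx n
end

section
/- Pearson equation for the Askey–Wilson weight at integer points: with σ(s) = −κ_q² q^{-2s+1/2}(q^s−a)(q^s−b)(q^s−c)(q^s−d) and ρ(s) = q^{-2s²}·(a,b,c,d;q)_s·(a,b,c,d;q)_{−s} for integer s ≥ 0 (where (a,b,c,d;q)_s = ∏ over the four parameters of the q-Pochhammer symbols, and (e;q)_{−k} = 1/∏_{j=1}^{k}(1−eq^{−j})), one has σ(s+1)ρ(s+1) = σ(−s)ρ(s) for all integers s ≥ 0 for which all the q-Pochhammer factors in ρ(s) and ρ(s+1) are nonzero denominators. -/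
/-! Write `q = r²`. Each parameter `e` contributes the factor `(q^t − e)(e;q)_k(e;q)_{−k}`
to `σ(t)ρ(k)`. Passing from `(t, k) = (−s, s)` to `(s+1, s+1)` multiplies it by `q^{2s+1}`:
the new denominator `1 − eq^{−s−1}` cancels against `q^{s+1} − e = q^{s+1}(1 − eq^{−s−1})`,
and the new numerator `1 − eq^s` turns `q^{s+1}` into `q^{2s+1}(q^{−s} − e)`. The four
factors `q^{2s+1}` exactly compensate the change of the prefactor `r^{1−4t}q^{−2k²}`. -/

open Finset

namespace AskeyWilson

variable {K : Type*} [Field K]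

def qPoch (e q : K) (k : ℕ) : K := ∏ j ∈ range k, (1 - e * q ^ (j : ℤ))

def qPochNeg (e q : K) (k : ℕ) : K := (∏ j ∈ Icc 1 k, (1 - e * q ^ (-(j : ℤ))))⁻¹

def paramFactor (e q : K) (t : ℤ) (k : ℕ) : K := (q ^ t - e) * qPoch e q k * qPochNeg e q k

theorem qPoch_succ (e q : K) (k : ℕ) :
    qPoch e q (k + 1) = qPoch e q k * (1 - e * q ^ (k : ℤ)) :=
  prod_range_succ _ _

theorem qPochNeg_succ (e q : K) (k : ℕ) :
    qPochNeg e q (k + 1) = qPochNeg e q k * (1 - e * q ^ (-((k : ℤ) + 1)))⁻¹ := by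
  rw [qPochNeg, qPochNeg, prod_Icc_succ_top (Nat.le_add_left 1 k), mul_inv]
  push_cast; rfl

theorem paramFactor_succ {q : K} (hq : q ≠ 0) (e : K) (k : ℕ)
    (he : 1 - e * q ^ (-((k : ℤ) + 1)) ≠ 0) :
    paramFactor e q ((k : ℤ) + 1) (k + 1) =
      q ^ (2 * (k : ℤ) + 1) * paramFactor e q (-(k : ℤ)) k := by
  have hsub : ∀ n : ℤ, q ^ n - e = q ^ n * (1 - e * q ^ (-n)) := fun n => by
    rw [mul_sub, mul_one, mul_left_comm, ← zpow_add₀ hq, add_neg_cancel, zpow_zero, mul_one]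
  have hpow : q ^ (2 * (k : ℤ) + 1) * q ^ (-(k : ℤ)) = q ^ ((k : ℤ) + 1) := by
    rw [← zpow_add₀ hq]; ring_nf
  rw [paramFactor, paramFactor, qPoch_succ, qPochNeg_succ, hsub, hsub (-(k : ℤ)), neg_neg,
    ← hpow]
  field_simp

theorem prefactor_shift {r : K} (hr : r ≠ 0) (s : ℤ) :
    r ^ (1 - 4 * (s + 1)) * (r ^ 2) ^ (-(2 * (s + 1) ^ 2)) * ((r ^ 2) ^ (2 * s + 1)) ^ 4 =
      r ^ (1 - 4 * -s) * (r ^ 2) ^ (-(2 * s ^ 2)) := by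
  simp only [← zpow_natCast, ← zpow_mul, ← zpow_add₀ hr]
  congr 1
  push_cast
  ring

end AskeyWilson

open Finset in
/-- Pearson equation for the Askey–Wilson weight at integer points `s ≥ 0`:
with `q = r²`, `κ_q = r − r⁻¹`,
`σ(t) = −κ_q² q^{−2t+1/2} (q^t−a)(q^t−b)(q^t−c)(q^t−d)`,
`(e;q)_s = ∏_{j<s}(1−eq^j)`, `(e;q)_{−s} = (∏_{j=1}^{s}(1−eq^{−j}))⁻¹`, and
`ρ(s) = q^{−2s²} (a,b,c,d;q)_s (a,b,c,d;q)_{−s}`, assuming all the inverted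
q-Pochhammer denominators are nonzero, one has `σ(s+1)ρ(s+1) = σ(−s)ρ(s)`. -/
theorem askey_wilson_pearson (r a b c d : ℂ) (hr : r ≠ 0) (s : ℕ)
    (σ : ℤ → ℂ)
    (hσ : ∀ t : ℤ, σ t = -(r - r⁻¹) ^ 2 * r ^ (1 - 4 * t) *
      ((r ^ 2) ^ t - a) * ((r ^ 2) ^ t - b) * ((r ^ 2) ^ t - c) * ((r ^ 2) ^ t - d))
    (poch : ℂ → ℕ → ℂ) (hpoch : ∀ e k, poch e k = ∏ j ∈ range k, (1 - e * (r ^ 2) ^ (j : ℤ)))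
    (pochNeg : ℂ → ℕ → ℂ)
    (hpochNeg : ∀ e k, pochNeg e k = (∏ j ∈ Icc 1 k, (1 - e * (r ^ 2) ^ (-(j : ℤ))))⁻¹)
    (ρ : ℕ → ℂ)
    (hρ : ∀ k : ℕ, ρ k = (r ^ 2) ^ (-(2 * (k : ℤ) ^ 2)) *
      (poch a k * poch b k * poch c k * poch d k) *
      (pochNeg a k * pochNeg b k * pochNeg c k * pochNeg d k))
    (hden : ∀ e ∈ ({a, b, c, d} : Set ℂ), ∀ j : ℕ, 1 ≤ j → j ≤ s + 1 →
      1 - e * (r ^ 2) ^ (-(j : ℤ)) ≠ 0) :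
    σ ((s : ℤ) + 1) * ρ (s + 1) = σ (-(s : ℤ)) * ρ s := by
  open AskeyWilson in
  have hσρ : ∀ (t : ℤ) (k : ℕ), σ t * ρ k = -(r - r⁻¹) ^ 2 * (r ^ (1 - 4 * t) *
      (r ^ 2) ^ (-(2 * (k : ℤ) ^ 2))) * (paramFactor a (r ^ 2) t k * paramFactor b (r ^ 2) t k *
        paramFactor c (r ^ 2) t k * paramFactor d (r ^ 2) t k) := fun t k => by
    simp only [hσ, hρ, hpoch, hpochNeg, paramFactor, qPoch, qPochNeg]
    ring
  have hshift : ∀ e ∈ ({a, b, c, d} : Set ℂ), paramFactor e (r ^ 2) ((s : ℤ) + 1) (s + 1) =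
      (r ^ 2) ^ (2 * (s : ℤ) + 1) * paramFactor e (r ^ 2) (-(s : ℤ)) s := fun e he =>
    paramFactor_succ (pow_ne_zero 2 hr) e s
      (by exact_mod_cast hden e he (s + 1) le_add_self le_rfl)
  rw [hσρ, hσρ, hshift a (by simp), hshift b (by simp), hshift c (by simp), hshift d (by simp),
    ← prefactor_shift hr]
  push_cast
  ring
end

section
/- Structure relation from two three-term recurrences: Let x : ½ℤ → ℂ be a lattice with x(s+1) ≠ x(s) for all integers s, x₁(s) = x(s+1/2), Δ^{(1)}f(s) = (f(s+1)−f(s))/(x(s+1)−x(s)), Mf(s) = (f(s+1)+f(s))/2, and suppose the mean identity M x(s) = α·x₁(s) + β holds for some constants α, β ∈ ℂ and all s. Let (p_n)_{n ≥ 0} be functions ℤ → ℂ with p_{−1} = 0 satisfying x(s)p_n(s) = α_n p_{n+1}(s) + β_n p_n(s) + γ_n p_{n−1}(s) for all n ≥ 0 and s, and suppose additionally x₁(s)·Δ^{(1)}p_n(s) = α'_n Δ^{(1)}p_{n+1}(s) + β'_n Δ^{(1)}p_n(s) + γ'_n Δ^{(1)}p_{n−1}(s) for all n ≥ 0 and s.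 Then for all n ≥ 0 and all s: M p_n(s) = (α_n − α·α'_n)·Δ^{(1)}p_{n+1}(s) + (β_n − β − α·β'_n)·Δ^{(1)}p_n(s) + (γ_n − α·γ'_n)·Δ^{(1)}p_{n−1}(s). -/
/-!
Apply the divided difference `Δ` to the recurrence `x p_n = a_n p_{n+1} + b_n p_n + c_n p_{n-1}`.
By the product rule `Δ(x f) = M x · Δ f + M f` the left side becomes `M x · Δ p_n + M p_n`, and
the mean identity turns `M x` into `α x₁ + β`. The term `α x₁ Δ p_n` is then expanded by the
recurrence for `Δ p_n`, leaving `M p_n` as a combination of `Δ p_{n+1}`, `Δ p_n`, `Δ p_{n-1}`.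
-/

namespace Lattice

variable {K : Type*} [Field K]

def divDiff (x f : ℤ → K) (s : ℤ) : K := (f (s + 1) - f s) / (x (s + 1) - x s)

def mean (f : ℤ → K) (s : ℤ) : K := (f (s + 1) + f s) / 2

theorem divDiff_linear_comb (x f g h : ℤ → K) (a b c : K) (s : ℤ) :
    divDiff x (fun t => a * f t + b * g t + c * h t) s =
      a * divDiff x f s + b * divDiff x g s + c * divDiff x h s := by
  simp only [divDiff]
  ring

theorem divDiff_mul_self [NeZero (2 : K)] {x : ℤ → K} {s : ℤ} (hx : x (s + 1) ≠ x s)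
    (f : ℤ → K) :
    divDiff x (fun t => x t * f t) s = mean x s * divDiff x f s + mean f s := by
  have hd : x (s + 1) - x s ≠ 0 := sub_ne_zero.mpr hx
  simp only [divDiff, mean]
  field_simp
  ring

end Lattice

open Lattice in
theorem structure_relation_from_ttrr_general (x x₁ : ℤ → ℂ)
    (hx : ∀ s : ℤ, x (s + 1) ≠ x s)
    (α β : ℂ)
    (hmean : ∀ s : ℤ, (x (s + 1) + x s) / 2 = α * x₁ s + β)
    (p : ℤ → ℤ → ℂ)
    (a b c a' b' c' : ℤ → ℂ)
    (httrr : ∀ n : ℤ, 0 ≤ n → ∀ s : ℤ,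
      x s * p n s = a n * p (n + 1) s + b n * p n s + c n * p (n - 1) s)
    (httrr' : ∀ n : ℤ, 0 ≤ n → ∀ s : ℤ,
      x₁ s * ((p n (s + 1) - p n s) / (x (s + 1) - x s)) =
        a' n * ((p (n + 1) (s + 1) - p (n + 1) s) / (x (s + 1) - x s)) +
          b' n * ((p n (s + 1) - p n s) / (x (s + 1) - x s)) +
          c' n * ((p (n - 1) (s + 1) - p (n - 1) s) / (x (s + 1) - x s))) :
    ∀ n : ℤ, 0 ≤ n → ∀ s : ℤ,
      (p n (s + 1) + p n s) / 2 =
        (a n - α * a' n) * ((p (n + 1) (s + 1) - p (n + 1) s) / (x (s + 1) - x s)) +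
          (b n - β - α * b' n) * ((p n (s + 1) - p n s) / (x (s + 1) - x s)) +
          (c n - α * c' n) * ((p (n - 1) (s + 1) - p (n - 1) s) / (x (s + 1) - x s)) := by
  intro n hn s
  have hΔ : divDiff x (fun t => x t * p n t) s =
      divDiff x (fun t => a n * p (n + 1) t + b n * p n t + c n * p (n - 1) t) s := by
    simp only [divDiff, httrr n hn]
  rw [divDiff_mul_self (hx s), divDiff_linear_comb, show mean x s = α * x₁ s + β from hmean s]
    at hΔ
  have hΔ' : x₁ s * divDiff x (p n) s = a' n * divDiff x (p (n + 1)) s +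
      b' n * divDiff x (p n) s + c' n * divDiff x (p (n - 1)) s := httrr' n hn s
  change mean (p n) s = (a n - α * a' n) * divDiff x (p (n + 1)) s +
    (b n - β - α * b' n) * divDiff x (p n) s + (c n - α * c' n) * divDiff x (p (n - 1)) s
  linear_combination hΔ - α * hΔ'

/-- Structure relation from two three-term recurrences. With
`Δ^{(1)}f(s) = (f(s+1)−f(s))/(x(s+1)−x(s))`, `Mf(s) = (f(s+1)+f(s))/2`, the mean
identity `Mx(s) = α x₁(s) + β`, the TTRR for `(p_n)` (with `p_{−1}=0`) and a TTRR
for `(Δ^{(1)}p_n)` on `x₁`, one gets, for all `n ≥ 0` and `s`: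
`Mp_n(s) = (α_n − α α'_n) Δ^{(1)}p_{n+1}(s) + (β_n − β − α β'_n) Δ^{(1)}p_n(s)
          + (γ_n − α γ'_n) Δ^{(1)}p_{n−1}(s)`. -/
theorem structure_relation_from_ttrr (x x₁ : ℤ → ℂ)
    (hx : ∀ s : ℤ, x (s + 1) ≠ x s)
    (α β : ℂ)
    (hmean : ∀ s : ℤ, (x (s + 1) + x s) / 2 = α * x₁ s + β)
    (p : ℤ → ℤ → ℂ) (hpneg : ∀ s : ℤ, p (-1) s = 0)
    (a b c a' b' c' : ℤ → ℂ)
    (httrr : ∀ n : ℤ, 0 ≤ n → ∀ s : ℤ,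
      x s * p n s = a n * p (n + 1) s + b n * p n s + c n * p (n - 1) s)
    (httrr' : ∀ n : ℤ, 0 ≤ n → ∀ s : ℤ,
      x₁ s * ((p n (s + 1) - p n s) / (x (s + 1) - x s)) =
        a' n * ((p (n + 1) (s + 1) - p (n + 1) s) / (x (s + 1) - x s)) +
          b' n * ((p n (s + 1) - p n s) / (x (s + 1) - x s)) +
          c' n * ((p (n - 1) (s + 1) - p (n - 1) s) / (x (s + 1) - x s))) :
    ∀ n : ℤ, 0 ≤ n → ∀ s : ℤ,
      (p n (s + 1) + p n s) / 2 =
        (a n - α * a' n) * ((p (n + 1) (s + 1) - p (n + 1) s) / (x (s + 1) - x s)) +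
          (b n - β - α * b' n) * ((p n (s + 1) - p n s) / (x (s + 1) - x s)) +
          (c n - α * c' n) * ((p (n - 1) (s + 1) - p (n - 1) s) / (x (s + 1) - x s)) :=
  structure_relation_from_ttrr_general x x₁ hx α β hmean p a b c a' b' c' httrr httrr'
end
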